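/- Let N be a finitely generated group in which every conjugacy class is finite (a finitely generated FC-group). Then the set Tor(N) of torsion elements of N is a finite characteristic subgroup of N, and N/Tor(N) is isomorphic to ℤⁿ for some n ≥ 0. -/

import Mathlib

/-!
The centralizer of `g` has index equal to the size of the conjugacy class of `g`, so in an
FC-group generated by a finite set `S` the center, being the intersection of the centralizers of
the elements of `S`, has finite index. A commutator `⁅a, b⁆` only depends on the cosets of `a` and
`b` modulo the center, so there are finitely many commutators, and by Schur's theorem the
commutator subgroup `N'` is finite. Since `N'` is finite, `g` has finite order iff its image in the
finitely generated abelian group `N ⧸ N'` does; hence `Tor(N)` is the preimage of the finite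
torsion subgroup of `N ⧸ N'`, and `N ⧸ Tor(N) ≅ (N ⧸ N') ⧸ Tor(N ⧸ N')` is free abelian.
-/

open Subgroup commutatorElement
open CommGroup (torsion)

section FCGroup

variable {G : Type*} [Group G]

theorem Subgroup.index_centralizer_singleton (g : G) :
    (centralizer {g}).index = {h | IsConj g h}.ncard := by
  rw [centralizer_eq_comap_stabilizer]
  refine (index_comap_of_surjective _ (f := ConjAct.toConjAct.toMonoidHom)
    ConjAct.toConjAct.surjective).trans ((MulAction.index_stabilizer (ConjAct G) g).trans ?_)
  congr 1
  ext h
  exact ConjAct.mem_orbit_conjAct.trans isConj_comm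

theorem Subgroup.finiteIndex_centralizer_singleton {g : G} (hg : {h | IsConj g h}.Finite) :
    (centralizer {g}).FiniteIndex :=
  ⟨by rw [index_centralizer_singleton]; exact Set.ncard_ne_zero_of_mem (IsConj.refl g) hg⟩

theorem Subgroup.finiteIndex_center_of_finite_isConj [Group.FG G]
    (hG : ∀ g : G, {h | IsConj g h}.Finite) : (center G).FiniteIndex := by
  obtain ⟨S, hS⟩ := Group.fg_def.mp ‹_›
  rw [center_eq_iInf hS]
  exact finiteIndex_iInf' _ fun g _ => finiteIndex_centralizer_singleton (hG g)

theorem Subgroup.mul_mul_inv_eq_of_mem_center {z : G} (hz : z ∈ center G) (x : G) :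
    z * x * z⁻¹ = x := by
  rw [← mem_center_iff.mp hz x, mul_inv_cancel_right]

theorem commutatorElement_mul_mul_of_mem_center {a b z w : G} (hz : z ∈ center G)
    (hw : w ∈ center G) : ⁅a * z, b * w⁆ = ⁅a, b⁆ :=
  calc ⁅a * z, b * w⁆ = a * (z * (b * w) * z⁻¹) * a⁻¹ * w⁻¹ * b⁻¹ := by group
    _ = a * b * (w * a⁻¹ * w⁻¹) * b⁻¹ := by rw [mul_mul_inv_eq_of_mem_center hz]; group
    _ = ⁅a, b⁆ := by rw [mul_mul_inv_eq_of_mem_center hw]; group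

theorem finite_commutatorSet_of_finiteIndex_center [(center G).FiniteIndex] :
    Finite (commutatorSet G) := by
  have hsub : commutatorSet G ⊆ Set.range
      fun p : (G ⧸ center G) × (G ⧸ center G) => ⁅p.1.out, p.2.out⁆ := by
    rintro _ ⟨a, b, rfl⟩
    obtain ⟨z, hz⟩ := QuotientGroup.mk_out_eq_mul (center G) a
    obtain ⟨w, hw⟩ := QuotientGroup.mk_out_eq_mul (center G) b
    exact ⟨(a, b), by simp only [hz, hw, commutatorElement_mul_mul_of_mem_center z.2 w.2]⟩
  exact (Set.finite_range _ |>.subset hsub).to_subtype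

end FCGroup

section FiniteKernel

variable {G H : Type*} [Group G] [Group H] (f : G →* H) [Finite f.ker]

theorem MonoidHom.isOfFinOrder_apply_iff_of_finite_ker {g : G} :
    IsOfFinOrder (f g) ↔ IsOfFinOrder g := by
  refine ⟨fun hfg => ?_, f.isOfFinOrder⟩
  obtain ⟨k, hk, hfgk⟩ := hfg.exists_pow_eq_one
  have hgk : g ^ k ∈ f.ker := by rwa [MonoidHom.mem_ker, map_pow]
  exact (Submonoid.isOfFinOrder_coe.mpr (isOfFinOrder_of_finite (⟨_, hgk⟩ : f.ker))).of_pow hk.ne'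

theorem Subgroup.finite_comap_of_finite_ker (K : Subgroup H) [Finite K] : Finite (K.comap f) := by
  refine Set.Finite.to_subtype ((Set.toFinite (K : Set H)).preimage' fun b _ => ?_)
  rcases (f ⁻¹' {b}).eq_empty_or_nonempty with h | ⟨g, hg⟩
  · simp [h]
  refine ((Set.toFinite (f.ker : Set G)).image (g * ·)).subset fun x hx =>
    ⟨g⁻¹ * x, ?_, mul_inv_cancel_left g x⟩
  simp_all [MonoidHom.mem_ker]

end FiniteKernel

theorem Subgroup.characteristic_of_forall_mem_iff_isOfFinOrder {G : Type*} [Group G]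
    {T : Subgroup G} (hT : ∀ g, g ∈ T ↔ IsOfFinOrder g) : T.Characteristic :=
  characteristic_iff_comap_eq.mpr fun φ => Subgroup.ext fun g => by
    rw [mem_comap, hT, hT]
    exact φ.injective.isOfFinOrder_iff (f := φ.toMonoidHom)

namespace CommGroup

variable {A : Type*} [CommGroup A] [Group.FG A]

theorem fg_subgroup_of_fg (H : Subgroup A) : Group.FG H := by
  have : Module.Finite ℤ (Additive A) := Module.Finite.iff_addGroup_fg.mpr inferInstance
  have hH : H.toAddSubgroup.FG := by
    rw [← AddSubgroup.toIntSubmodule_toAddSubgroup H.toAddSubgroup,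
      ← Submodule.fg_iff_addSubgroup_fg]
    exact IsNoetherian.noetherian _
  exact (Group.fg_iff_subgroup_fg H).mpr ((Subgroup.fg_iff_add_fg H).mpr hH)

theorem finite_torsion_of_fg : Finite (torsion A) :=
  have := fg_subgroup_of_fg (torsion A)
  finite_of_fg_isMulTorsion _ CommMonoid.torsion.isMulTorsion

theorem exists_surjective_ker_eq_torsion :
    ∃ (n : ℕ) (ψ : A →* Multiplicative (Fin n → ℤ)),
      Function.Surjective ψ ∧ ψ.ker = torsion A := by
  have : Module.Finite ℤ (Additive (A ⧸ torsion A)) :=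
    Module.Finite.iff_addGroup_fg.mpr inferInstance
  obtain ⟨n, b⟩ := Module.basisOfFiniteTypeTorsionFree' (R := ℤ) (M := Additive (A ⧸ torsion A))
  let e : A ⧸ torsion A ≃* Multiplicative (Fin n → ℤ) :=
    AddEquiv.toMultiplicativeRight b.equivFun.toAddEquiv
  refine ⟨n, (e : A ⧸ torsion A →* _).comp (QuotientGroup.mk' _),
    e.surjective.comp (QuotientGroup.mk'_surjective _), ?_⟩
  rw [MonoidHom.ker_mulEquiv_comp, QuotientGroup.ker_mk']

end CommGroup

/-- A finitely generated FC-group N has finite characteristic torsion subgroup Tor(N),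
and N/Tor(N) ≅ ℤⁿ for some n. -/
theorem fg_FC_group_structure {N : Type*} [Group N] (hfg : Group.FG N)
    (hFC : ∀ n : N, {x : N | IsConj n x}.Finite) :
    ∃ T : Subgroup N, (T : Set N) = {n : N | IsOfFinOrder n} ∧
      Finite T ∧ T.Characteristic ∧
      ∃ (n : ℕ) (φ : N →* Multiplicative (Fin n → ℤ)),
        Function.Surjective φ ∧ φ.ker = T := by
  have := finiteIndex_center_of_finite_isConj hFC
  have := finite_commutatorSet_of_finiteIndex_center (G := N)
  have : Finite (Abelianization.of (G := N)).ker := by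
    rw [Abelianization.ker_of]
    infer_instance -- Schur's theorem
  have : Group.FG (Abelianization N) :=
    Group.fg_of_surjective (f := Abelianization.of) QuotientGroup.mk_surjective
  have := CommGroup.finite_torsion_of_fg (A := Abelianization N)
  let T := (torsion (Abelianization N)).comap Abelianization.of
  have hT : ∀ g, g ∈ T ↔ IsOfFinOrder g := fun _ =>
    Abelianization.of.isOfFinOrder_apply_iff_of_finite_ker
  obtain ⟨n, ψ, hψ, hker⟩ := CommGroup.exists_surjective_ker_eq_torsion (A := Abelianization N)
  refine ⟨T, Set.ext hT, finite_comap_of_finite_ker _ _,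
    characteristic_of_forall_mem_iff_isOfFinOrder hT, n, ψ.comp Abelianization.of,
    hψ.comp QuotientGroup.mk_surjective, ?_⟩
  rw [← MonoidHom.comap_ker, hker]
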